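/- Let X be a two-term R[1]-rigid subcategory. The following are equivalent: (1) X is two-term maximal R[1]-rigid and every object of R admits a left X-approximation; (2) R ⊆ X[-1] * X; (3) X is two-term weak R[1]-cluster tilting. -/

import Mathlib

open CategoryTheory CategoryTheory.Limits CategoryTheory.Pretriangulated

universe v u w

namespace RelCT

/-- Krull–Schmidt: every object decomposes as a finite biproduct of objects with local
endomorphism rings. -/
def KrullSchmidtCat (C : Type u) [Category.{v} C] [Preadditive C] : Prop :=
  ∀ X : C, ∃ (n : ℕ) (f : Fin n → C) (p : ∀ i, X ⟶ f i) (ι : ∀ i, f i ⟶ X),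
    (∀ i, ι i ≫ p i = 𝟙 (f i)) ∧ (∑ i, p i ≫ ι i) = 𝟙 X ∧
    ∀ i (φ : f i ⟶ f i), IsIso φ ∨ IsIso (𝟙 (f i) - φ)

/-- `Fac W`: objects admitting an epimorphism from an object of `W`. -/
def FacSet {Q : Type w} [Category Q] (W : Set Q) : Set Q :=
  {Y | ∃ X ∈ W, ∃ p : X ⟶ Y, Epi p}

/-- `Ext¹(X, F) = 0`, expressed as: every short exact sequence
`0 → F → E → X → 0` splits. -/
def Ext1Zero {Q : Type w} [Category Q] [Abelian Q] (X F : Q) : Prop :=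
  ∀ S : CategoryTheory.ShortComplex Q, S.ShortExact → (S.X₁ ≅ F) → (S.X₃ ≅ X) →
    ∃ r : S.X₂ ⟶ S.X₁, S.f ≫ r = 𝟙 S.X₁

variable {C : Type u} [Category.{v} C] [Preadditive C] [HasZeroObject C]
  [HasShift C ℤ] [∀ n : ℤ, (CategoryTheory.shiftFunctor C n).Additive] [Pretriangulated C]

/-- The shift `D[n]` of a collection of objects, closed under isomorphism. -/
def shiftSet (D : Set C) (n : ℤ) : Set C :=
  {X | ∃ Y ∈ D, Nonempty (X ≅ Y⟦n⟧)}

/-- `f` factors through an object of `D`. -/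
def Factors (D : Set C) {A B : C} (f : A ⟶ B) : Prop :=
  ∃ (Z : C) (g : A ⟶ Z) (h : Z ⟶ B), Z ∈ D ∧ f = g ≫ h

/-- `X * Y`: objects `M` admitting a distinguished triangle `A → M → B → A[1]`
with `A ∈ X`, `B ∈ Y`. -/
def star (X Y : Set C) : Set C :=
  {M | ∃ (A B : C) (f : A ⟶ M) (g : M ⟶ B) (h : B ⟶ A⟦(1:ℤ)⟧),
    A ∈ X ∧ B ∈ Y ∧ (Triangle.mk f g h ∈ distTriang C)}

/-- `R` is rigid: `Hom(R, R[1]) = 0`. -/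
def Rigid (R : Set C) : Prop :=
  ∀ ⦃A B : C⦄, A ∈ R → B ∈ R → ∀ f : A ⟶ B⟦(1:ℤ)⟧, f = 0

/-- `[R[1]](X, Y[1]) = 0` : every morphism from an object of `X` to a first shift of
an object of `Y` which factors through `R[1]` vanishes. -/
def RelRigid (R X Y : Set C) : Prop :=
  ∀ ⦃A B : C⦄, A ∈ X → B ∈ Y → ∀ f : A ⟶ B⟦(1:ℤ)⟧, Factors (shiftSet R 1) f → f = 0

/-- Closure of a collection of objects under finite direct sums and direct summands. -/
inductive addClosure (D : Set C) : C → Prop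
  | of {X : C} : X ∈ D → addClosure D X
  | zero {X : C} : IsZero X → addClosure D X
  | sum {X Y Z : C} : addClosure D X → addClosure D Y →
      (∃ (pX : Z ⟶ X) (pY : Z ⟶ Y) (iX : X ⟶ Z) (iY : Y ⟶ Z),
        iX ≫ pX = 𝟙 X ∧ iY ≫ pY = 𝟙 Y ∧ pX ≫ iX + pY ≫ iY = 𝟙 Z) →
      addClosure D Z
  | smd {X Y : C} : addClosure D Y → (∃ (s : X ⟶ Y) (r : Y ⟶ X), s ≫ r = 𝟙 X) →
      addClosure D X

/-- `D` is closed under finite direct sums and direct summands. -/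
def AddClosed (D : Set C) : Prop := ∀ X : C, addClosure D X → X ∈ D

/-- closed under direct sums (expressed via biproduct data). -/
def SumClosed (D : Set C) : Prop :=
  ∀ ⦃X Y Z : C⦄, X ∈ D → Y ∈ D →
    (∃ (pX : Z ⟶ X) (pY : Z ⟶ Y) (iX : X ⟶ Z) (iY : Y ⟶ Z),
      iX ≫ pX = 𝟙 X ∧ iY ≫ pY = 𝟙 Y ∧ pX ≫ iX + pY ≫ iY = 𝟙 Z) → Z ∈ D

/-- closed under direct summands. -/
def SummandClosed (D : Set C) : Prop :=
  ∀ ⦃X Y : C⦄, Y ∈ D → (∃ (s : X ⟶ Y) (r : Y ⟶ X), s ≫ r = 𝟙 X) → X ∈ D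

/-- closed under isomorphisms. -/
def IsoClosed (D : Set C) : Prop :=
  ∀ ⦃X Y : C⦄, X ∈ D → Nonempty (X ≅ Y) → Y ∈ D

/-- `f : A ⟶ X` is a left `D`-approximation of `A`. -/
def IsLeftApprox (D : Set C) {A X : C} (f : A ⟶ X) : Prop :=
  X ∈ D ∧ ∀ ⦃X' : C⦄, X' ∈ D → ∀ g : A ⟶ X', ∃ h : X ⟶ X', f ≫ h = g

/-- `f : X ⟶ A` is a right `D`-approximation of `A`. -/
def IsRightApprox (D : Set C) {X A : C} (f : X ⟶ A) : Prop :=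
  X ∈ D ∧ ∀ ⦃X' : C⦄, X' ∈ D → ∀ g : X' ⟶ A, ∃ h : X' ⟶ X, h ≫ f = g

/-- `f` is left minimal. -/
def LeftMinimal {A B : C} (f : A ⟶ B) : Prop :=
  ∀ u : B ⟶ B, f ≫ u = f → IsIso u

/-- `f` is right minimal. -/
def RightMinimal {A B : C} (f : A ⟶ B) : Prop :=
  ∀ u : A ⟶ A, u ≫ f = f → IsIso u

/-- `f` lies in the Jacobson radical of the category. -/
def InRadical {A B : C} (f : A ⟶ B) : Prop :=
  ∀ g : B ⟶ A, IsIso (𝟙 A - f ≫ g)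

/-- indecomposable object. -/
def Indec (W : C) : Prop :=
  ¬ IsZero W ∧ ∀ p : W ⟶ W, p ≫ p = p → p = 0 ∨ p = 𝟙 W

/-- two-term `R[1]`-rigid subcategory. -/
def TwoTermRigid (R X : Set C) : Prop :=
  RelRigid R X X ∧ X ⊆ star R (shiftSet R 1)

/-- two-term maximal `R[1]`-rigid subcategory. -/
def TwoTermMaximal (R X : Set C) : Prop :=
  TwoTermRigid R X ∧
  ∀ M ∈ star R (shiftSet R 1),
    RelRigid R {Z | addClosure (insert M X) Z} {Z | addClosure (insert M X) Z} → M ∈ X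

/-- two-term weak `R[1]`-cluster tilting subcategory. -/
def TwoTermWCT (R X : Set C) : Prop :=
  X ⊆ star R (shiftSet R 1) ∧ R ⊆ star (shiftSet X (-1)) X ∧
  ∀ M : C, M ∈ X ↔ (M ∈ star R (shiftSet R 1) ∧ RelRigid R {M} X ∧ RelRigid R X {M})

/-- `R(X) = { R₀ ∈ R | Hom(R₀, X) = 0 }`. -/
def RZero (R X : Set C) : Set C :=
  {A | A ∈ R ∧ ∀ B ∈ X, ∀ f : A ⟶ B, f = 0}

/-- `X` is `R[1]`-functorially finite. -/
def RFunctoriallyFinite (R X : Set C) : Prop :=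
  (∀ R₀ ∈ R, ∃ (X₀ : C) (f : R₀ ⟶ X₀), IsLeftApprox X f) ∧
  (∀ A ∈ shiftSet R 1, ∃ (X₀ : C) (f : X₀ ⟶ A), IsRightApprox X f)

/-- Data of triangles `R₀ → X^{R₀} → V^{R₀} → R₀[1]` with minimal left `X`-approximations,
defining the completion `M_X`. -/
structure MData (R X : Set C) where
  obj : ∀ R₀ : C, R₀ ∈ R → C
  cone : ∀ R₀ : C, R₀ ∈ R → C
  f : ∀ (R₀ : C) (h : R₀ ∈ R), R₀ ⟶ obj R₀ h
  g : ∀ (R₀ : C) (h : R₀ ∈ R), obj R₀ h ⟶ cone R₀ h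
  w : ∀ (R₀ : C) (h : R₀ ∈ R), cone R₀ h ⟶ R₀⟦(1:ℤ)⟧
  tri : ∀ (R₀ : C) (h : R₀ ∈ R), Triangle.mk (f R₀ h) (g R₀ h) (w R₀ h) ∈ distTriang C
  approx : ∀ (R₀ : C) (h : R₀ ∈ R), IsLeftApprox X (f R₀ h)
  minimal : ∀ (R₀ : C) (h : R₀ ∈ R), LeftMinimal (f R₀ h)

/-- `M_X = add (X ∪ {V^R | R ∈ R})`. -/
def MData.cat {R X : Set C} (d : MData R X) : Set C :=
  {Z | addClosure (X ∪ {V | ∃ (R₀ : C) (h : R₀ ∈ R), V = d.cone R₀ h}) Z}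

/-- Data of triangles `R₀ → V_{R₀} → U_{R₀} → R₀[1]` with the last map a right
`X`-approximation, defining the completion `N_X`. -/
structure NData (R X : Set C) where
  cocone : ∀ R₀ : C, R₀ ∈ R → C
  obj : ∀ R₀ : C, R₀ ∈ R → C
  a : ∀ (R₀ : C) (h : R₀ ∈ R), R₀ ⟶ cocone R₀ h
  b : ∀ (R₀ : C) (h : R₀ ∈ R), cocone R₀ h ⟶ obj R₀ h
  c : ∀ (R₀ : C) (h : R₀ ∈ R), obj R₀ h ⟶ R₀⟦(1:ℤ)⟧
  tri : ∀ (R₀ : C) (h : R₀ ∈ R), Triangle.mk (a R₀ h) (b R₀ h) (c R₀ h) ∈ distTriang C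
  approx : ∀ (R₀ : C) (h : R₀ ∈ R), IsRightApprox X (c R₀ h)

/-- `N_X = add (X ∪ {V_R | R ∈ R})`. -/
def NData.cat {R X : Set C} (d : NData R X) : Set C :=
  {Z | addClosure (X ∪ {V | ∃ (R₀ : C) (h : R₀ ∈ R), V = d.cocone R₀ h}) Z}

/-- `(M, N)` is an `X`-mutation pair. -/
def MutationPair (R X M N : Set C) : Prop :=
  M ≠ N ∧ TwoTermWCT R M ∧ TwoTermWCT R N ∧ X ⊆ M ∧ X ⊆ N ∧
  (∀ Y ∈ M, ∃ (Z X₀ : C) (z : Z ⟶ X₀) (x : X₀ ⟶ Y) (y : Y ⟶ Z⟦(1:ℤ)⟧),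
      Z ∈ N ∧ X₀ ∈ X ∧ (Triangle.mk z x y ∈ distTriang C) ∧ Factors (shiftSet R 1) y) ∧
  (∀ Z' ∈ N, ∃ (X' Y' : C) (z' : Z' ⟶ X') (x' : X' ⟶ Y') (y' : Y' ⟶ Z'⟦(1:ℤ)⟧),
      X' ∈ X ∧ Y' ∈ M ∧ (Triangle.mk z' x' y' ∈ distTriang C) ∧ Factors (shiftSet R 1) y')

/-- almost complete two-term weak `R[1]`-cluster tilting subcategory. -/
def AlmostComplete (R X : Set C) : Prop :=
  TwoTermRigid R X ∧ RFunctoriallyFinite R X ∧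
    ∃ W : C, Indec W ∧ W ∉ X ∧ TwoTermWCT R {Z | addClosure (insert W X) Z}

/-- completion of an almost complete subcategory `X`. -/
def IsCompletion (R X U : Set C) : Prop :=
  TwoTermWCT R U ∧ ∃ W : C, Indec W ∧ W ∉ X ∧ U = {Z | addClosure (insert W X) Z}

/-!
The heart of the theorem is that `R ⊆ X[-1] * X` forces every `M ∈ R * R[1]` with
`[R[1]](M, X[1]) = 0 = [R[1]](X, M[1])` into `X`. Write `R₁ → M → R₂[1] → R₁[1]` and take the
triangles `A_i → R_i → B_i → A_i[1]` with `A_i[1], B_i ∈ X`. The two vanishing conditions make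
`R₁ → M` factor through `R₁ → B₁` and `M → R₂[1]` through `A₂[1] → R₂[1]`, and a diagram chase,
using the rigidity of `X` once more, writes `𝟙 M` as a sum of maps through `A₂[1]` and `B₁`; so `M`
is a summand of `A₂[1] ⊕ B₁ ∈ X`. This gives (2) ⇒ (3), and also (2) ⇒ (1): the map
`R₀ → B₀` in a triangle `A₀ → R₀ → B₀ → A₀[1]` is a left `X`-approximation.

For (1) ⇒ (2), complete a left `X`-approximation `R₀ → X₀` to a triangle `R₀ → X₀ → V → R₀[1]`.
Then `V` is relatively rigid against `X` and itself, and `V ∈ R * R[1]`: if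
`R₁ → X₀ → R₂[1] → R₁[1]` exhibits `X₀ ∈ R * R[1]`, the cone `Q` of the composite `R₁ → X₀ → V`
is a retract of `R₂[1] ⊕ R₀[1] ⊕ R₁[1]`, hence lies in `R[1]`. By maximality `V ∈ X`, and the
rotated triangle `V[-1] → R₀ → X₀ → V` shows `R₀ ∈ X[-1] * X`.
-/

set_option linter.unusedSectionVars false

lemma Factors.precomp {D : Set C} {A A' B : C} {f : A ⟶ B} (h : Factors D f) (g : A' ⟶ A) :
    Factors D (g ≫ f) := by
  obtain ⟨Z, a, b, hZ, rfl⟩ := h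
  exact ⟨Z, g ≫ a, b, hZ, by simp⟩

lemma Factors.postcomp {D : Set C} {A B B' : C} {f : A ⟶ B} (h : Factors D f) (g : B ⟶ B') :
    Factors D (f ≫ g) := by
  obtain ⟨Z, a, b, hZ, rfl⟩ := h
  exact ⟨Z, a, b ≫ g, hZ, by simp⟩

lemma shift_mem_shiftSet {D : Set C} {Y : C} (hY : Y ∈ D) (n : ℤ) : Y⟦n⟧ ∈ shiftSet D n :=
  ⟨Y, hY, ⟨Iso.refl _⟩⟩

lemma factors_shiftSet_comp {D : Set C} {n : ℤ} {A B Y : C} (hY : Y ∈ D) (f : A ⟶ Y⟦n⟧)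
    (g : Y⟦n⟧ ⟶ B) : Factors (shiftSet D n) (f ≫ g) :=
  ⟨_, f, g, shift_mem_shiftSet hY n, rfl⟩

lemma Factors.exists_shift {D : Set C} {n : ℤ} {A B : C} {f : A ⟶ B}
    (h : Factors (shiftSet D n) f) :
    ∃ Y ∈ D, ∃ (g : A ⟶ Y⟦n⟧) (g' : Y⟦n⟧ ⟶ B), f = g ≫ g' := by
  obtain ⟨Z, g, g', ⟨Y, hY, ⟨e⟩⟩, rfl⟩ := h
  exact ⟨Y, hY, g ≫ e.hom, e.inv ≫ g', by simp⟩

lemma addClosure.of_iso {D : Set C} {Y Y' : C} (h : addClosure D Y) (e : Y ≅ Y') :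
    addClosure D Y' :=
  .smd h ⟨e.inv, e.hom, e.inv_hom_id⟩

lemma addClosure.map {D E : Set C} (F : C ⥤ C) [F.Additive]
    (hF : ∀ Y ∈ D, addClosure E (F.obj Y)) {Y : C} (hY : addClosure D Y) :
    addClosure E (F.obj Y) := by
  induction hY with
  | of h => exact hF _ h
  | zero h => exact .zero (F.map_isZero h)
  | sum _ _ hdata ih₁ ih₂ =>
    obtain ⟨p₁, p₂, i₁, i₂, h₁, h₂, hsum⟩ := hdata
    refine .sum ih₁ ih₂ ⟨F.map p₁, F.map p₂, F.map i₁, F.map i₂, ?_, ?_, ?_⟩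
    · rw [← F.map_comp, h₁, F.map_id]
    · rw [← F.map_comp, h₂, F.map_id]
    · rw [← F.map_comp, ← F.map_comp, ← F.map_add, hsum, F.map_id]
  | smd _ hdata ih =>
    obtain ⟨s, r, hsr⟩ := hdata
    exact .smd ih ⟨F.map s, F.map r, by rw [← F.map_comp, hsr, F.map_id]⟩

lemma AddClosed.mem_of_iso {D : Set C} (hD : AddClosed D) {Y Y' : C} (hY : Y ∈ D)
    (e : Y ≅ Y') : Y' ∈ D :=
  hD _ ((addClosure.of hY).of_iso e)

lemma AddClosed.shift_mem_of_mem_shiftSet_neg {D : Set C} (hD : AddClosed D) {n : ℤ} {A : C}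
    (hA : A ∈ shiftSet D (-n)) : A⟦n⟧ ∈ D := by
  obtain ⟨Y, hY, ⟨e⟩⟩ := hA
  exact hD.mem_of_iso hY ((shiftNegShift Y n).symm ≪≫ ((shiftFunctor C n).mapIso e).symm)

lemma AddClosed.shiftSet {D : Set C} (hD : AddClosed D) (n : ℤ) : AddClosed (shiftSet D n) := by
  intro Y hY
  have hY' : addClosure D (Y⟦-n⟧) := hY.map (shiftFunctor C (-n)) fun Z hZ => by
    obtain ⟨W, hW, ⟨e⟩⟩ := hZ
    exact (addClosure.of hW).of_iso
      ((shiftShiftNeg W n).symm ≪≫ (shiftFunctor C (-n)).mapIso e.symm)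
  exact ⟨Y⟦-n⟧, hD _ hY', ⟨(shiftNegShift Y n).symm⟩⟩

lemma AddClosed.biprod_mem {D : Set C} (hD : AddClosed D) {Y₁ Y₂ : C} (h₁ : Y₁ ∈ D)
    (h₂ : Y₂ ∈ D) : (Y₁ ⊞ Y₂) ∈ D :=
  hD _ (.sum (.of h₁) (.of h₂)
    ⟨biprod.fst, biprod.snd, biprod.inl, biprod.inr, by simp, by simp, biprod.total⟩)

lemma AddClosed.mem_of_id_eq_add {D : Set C} (hD : AddClosed D) {M Y₁ Y₂ : C} (h₁ : Y₁ ∈ D)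
    (h₂ : Y₂ ∈ D) {p₁ : M ⟶ Y₁} {q₁ : Y₁ ⟶ M} {p₂ : M ⟶ Y₂} {q₂ : Y₂ ⟶ M}
    (h : 𝟙 M = p₁ ≫ q₁ + p₂ ≫ q₂) : M ∈ D :=
  hD _ (.smd (.of (hD.biprod_mem h₁ h₂))
    ⟨biprod.lift p₁ p₂, biprod.desc q₁ q₂, by rw [biprod.lift_desc, h]⟩)

lemma exists_distTriang_of_mem_star_shiftSet {D E : Set C} {n : ℤ} {M : C}
    (hM : M ∈ star D (shiftSet E n)) :
    ∃ A ∈ D, ∃ B ∈ E, ∃ (f : A ⟶ M) (g : M ⟶ B⟦n⟧) (h : B⟦n⟧ ⟶ A⟦(1:ℤ)⟧),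
      Triangle.mk f g h ∈ distTriang C := by
  obtain ⟨A, B', f, g, h, hA, ⟨B, hB, ⟨e⟩⟩, hT⟩ := hM
  refine ⟨A, hA, B, hB, f, g ≫ e.hom, e.inv ≫ h, isomorphic_distinguished _ hT _ ?_⟩
  refine Triangle.isoMk _ _ (Iso.refl A) (Iso.refl M) e.symm ?_ ?_ ?_
  · show f ≫ 𝟙 M = 𝟙 A ≫ f
    simp
  · show (g ≫ e.hom) ≫ e.inv = 𝟙 M ≫ g
    simp
  · show (e.inv ≫ h) ≫ (𝟙 A)⟦(1:ℤ)⟧' = e.inv ≫ h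
    simp

namespace RelRigid

variable {R X Y : Set C}

lemma mono {X' Y' : Set C} (h : RelRigid R X Y) (hX : X' ⊆ X) (hY : Y' ⊆ Y) :
    RelRigid R X' Y' :=
  fun _ _ hA hB f hf => h (hX hA) (hY hB) f hf

lemma comp_eq_zero (h : RelRigid R X Y) {A R₀ B : C} (hA : A ∈ X) (hR₀ : R₀ ∈ R) (hB : B ∈ Y)
    (f : A ⟶ R₀⟦(1:ℤ)⟧) (g : R₀⟦(1:ℤ)⟧ ⟶ B⟦(1:ℤ)⟧) : f ≫ g = 0 :=
  h hA hB _ (factors_shiftSet_comp hR₀ f g)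

lemma comp_eq_zero_of_shift_mem (h : RelRigid R X Y) {A R₀ B : C} (hA : A⟦(1:ℤ)⟧ ∈ X)
    (hR₀ : R₀ ∈ R) (hB : B ∈ Y) (f : A ⟶ R₀) (g : R₀ ⟶ B) : f ≫ g = 0 :=
  (shiftFunctor C (1:ℤ)).map_injective (by
    rw [Functor.map_comp, Functor.map_zero, h.comp_eq_zero hA hR₀ hB])

lemma addClosure_left (h : RelRigid R X Y) : RelRigid R {Z | addClosure X Z} Y := by
  intro A B hA hB
  induction hA with
  | of hA => exact h hA hB
  | zero hA => exact fun f _ => hA.eq_of_src f 0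
  | sum _ _ hdata ih₁ ih₂ =>
    obtain ⟨p₁, p₂, i₁, i₂, -, -, hsum⟩ := hdata
    intro f hf
    calc f = p₁ ≫ i₁ ≫ f + p₂ ≫ i₂ ≫ f := by
          rw [← Category.assoc, ← Category.assoc, ← Preadditive.add_comp, hsum, Category.id_comp]
      _ = 0 := by rw [ih₁ _ (hf.precomp i₁), ih₂ _ (hf.precomp i₂), comp_zero, comp_zero, add_zero]
  | smd _ hdata ih =>
    obtain ⟨s, r, hsr⟩ := hdata
    intro f hf
    calc f = s ≫ r ≫ f := by rw [← Category.assoc, hsr, Category.id_comp]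
      _ = 0 := by rw [ih _ (hf.precomp r), comp_zero]

lemma addClosure_right (h : RelRigid R X Y) : RelRigid R X {Z | addClosure Y Z} := by
  intro A B hA hB
  induction hB with
  | of hB => exact h hA hB
  | zero hB => exact fun f _ => ((shiftFunctor C (1:ℤ)).map_isZero hB).eq_of_tgt f 0
  | sum _ _ hdata ih₁ ih₂ =>
    obtain ⟨p₁, p₂, i₁, i₂, -, -, hsum⟩ := hdata
    intro f hf
    calc f = f ≫ (p₁ ≫ i₁ + p₂ ≫ i₂)⟦(1:ℤ)⟧' := by
          rw [hsum, (shiftFunctor C (1:ℤ)).map_id, Category.comp_id]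
      _ = (f ≫ p₁⟦(1:ℤ)⟧') ≫ i₁⟦(1:ℤ)⟧' + (f ≫ p₂⟦(1:ℤ)⟧') ≫ i₂⟦(1:ℤ)⟧' := by
          simp only [Functor.map_add, Functor.map_comp, Preadditive.comp_add, Category.assoc]
      _ = 0 := by
          rw [ih₁ _ (hf.postcomp _), ih₂ _ (hf.postcomp _), zero_comp, zero_comp, add_zero]
  | smd _ hdata ih =>
    obtain ⟨s, r, hsr⟩ := hdata
    intro f hf
    calc f = (f ≫ s⟦(1:ℤ)⟧') ≫ r⟦(1:ℤ)⟧' := by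
          rw [Category.assoc, ← Functor.map_comp, hsr, (shiftFunctor C (1:ℤ)).map_id,
            Category.comp_id]
      _ = 0 := by rw [ih _ (hf.postcomp _), zero_comp]

lemma addClosure (h : RelRigid R X Y) : RelRigid R {Z | addClosure X Z} {Z | addClosure Y Z} :=
  h.addClosure_right.addClosure_left

lemma insert {M : C} (hXX : RelRigid R X X) (hMX : RelRigid R {M} X) (hXM : RelRigid R X {M})
    (hMM : RelRigid R {M} {M}) : RelRigid R (insert M X) (insert M X) := by
  rintro A B (rfl | hA) (rfl | hB)
  exacts [hMM rfl rfl, hMX rfl hB, hXM hA rfl, hXX hA hB]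

lemma of_factors_right {X₀ V : C} (h : RelRigid R Y {X₀}) (p : X₀ ⟶ V)
    (hp : ∀ R' ∈ R, ∀ γ : R' ⟶ V, ∃ δ : R' ⟶ X₀, γ = δ ≫ p) : RelRigid R Y {V} := by
  rintro A _ hA rfl φ hφ
  obtain ⟨R', hR', β, γ, rfl⟩ := hφ.exists_shift
  obtain ⟨δ, hδ⟩ := hp R' hR' ((shiftFunctor C (1:ℤ)).preimage γ)
  have hγ : γ = δ⟦(1:ℤ)⟧' ≫ p⟦(1:ℤ)⟧' := by
    rw [← Functor.map_comp, ← hδ, Functor.map_preimage]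
  rw [hγ, ← Category.assoc, h.comp_eq_zero hA hR' rfl, zero_comp]

end RelRigid

/-- Stands in for the octahedral axiom, which a pretriangulated category lacks: with it, `f ≫ v = 0`
would split the cone `Q` of `u ≫ g` as `B ⊕ R₀⟦1⟧`; exactness alone still makes `Q` a retract
of `B ⊕ R₀⟦1⟧ ⊕ R₁⟦1⟧`. -/
lemma exists_id_eq_add_of_cone_comp {R₀ X₀ V R₁ B Q : C}
    {f : R₀ ⟶ X₀} {g : X₀ ⟶ V} {d : V ⟶ R₀⟦(1:ℤ)⟧} (hT : Triangle.mk f g d ∈ distTriang C)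
    {u : R₁ ⟶ X₀} {v : X₀ ⟶ B} {w : B ⟶ R₁⟦(1:ℤ)⟧} (hS : Triangle.mk u v w ∈ distTriang C)
    {c : V ⟶ Q} {e : Q ⟶ R₁⟦(1:ℤ)⟧} (hQ : Triangle.mk (u ≫ g) c e ∈ distTriang C)
    (hfv : f ≫ v = 0) :
    ∃ (φ₁ : Q ⟶ B) (χ : B ⟶ Q) (φ₂ : Q ⟶ R₀⟦(1:ℤ)⟧) (ψ : R₀⟦(1:ℤ)⟧ ⟶ Q)
      (ε : R₁⟦(1:ℤ)⟧ ⟶ Q), 𝟙 Q = φ₁ ≫ χ + φ₂ ≫ ψ + e ≫ ε := by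
  obtain ⟨v', hv'⟩ : ∃ v' : V ⟶ B, v = g ≫ v' := Triangle.yoneda_exact₂ _ hT v hfv
  obtain ⟨φ₁, hφ₁⟩ : ∃ φ₁ : Q ⟶ B, v' = c ≫ φ₁ := Triangle.yoneda_exact₂ _ hQ v' (by
    show (u ≫ g) ≫ v' = 0
    rw [Category.assoc, ← hv']
    exact comp_distTriang_mor_zero₁₂ _ hS)
  obtain ⟨φ₂, hφ₂⟩ : ∃ φ₂ : Q ⟶ R₀⟦(1:ℤ)⟧, d = c ≫ φ₂ := Triangle.yoneda_exact₂ _ hQ d (by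
    show (u ≫ g) ≫ d = 0
    rw [Category.assoc, show g ≫ d = 0 from comp_distTriang_mor_zero₂₃ _ hT, comp_zero])
  obtain ⟨χ, hχ, -⟩ : ∃ χ : B ⟶ Q, v ≫ χ = g ≫ c ∧ w ≫ (𝟙 R₁)⟦(1:ℤ)⟧' = χ ≫ e :=
    complete_distinguished_triangle_morphism _ _ hS hQ (𝟙 R₁) g (by
      show u ≫ g = 𝟙 R₁ ≫ u ≫ g
      rw [Category.id_comp])
  obtain ⟨ψ, hψ⟩ : ∃ ψ : R₀⟦(1:ℤ)⟧ ⟶ Q, v' ≫ χ - c = d ≫ ψ :=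
    Triangle.yoneda_exact₃ _ hT (v' ≫ χ - c) (by
      show g ≫ (v' ≫ χ - c) = 0
      rw [Preadditive.comp_sub, ← Category.assoc, ← hv', hχ, sub_self])
  obtain ⟨ε, hε⟩ : ∃ ε : R₁⟦(1:ℤ)⟧ ⟶ Q, 𝟙 Q - φ₁ ≫ χ + φ₂ ≫ ψ = e ≫ ε :=
    Triangle.yoneda_exact₃ _ hQ (𝟙 Q - φ₁ ≫ χ + φ₂ ≫ ψ) (by
      show c ≫ (𝟙 Q - φ₁ ≫ χ + φ₂ ≫ ψ) = 0
      simp only [Preadditive.comp_add, Preadditive.comp_sub, Category.comp_id, ← Category.assoc,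
        ← hφ₁, ← hφ₂, ← hψ]
      abel)
  refine ⟨φ₁, χ, φ₂, -ψ, ε, ?_⟩
  rw [← hε, Preadditive.comp_neg]
  abel

lemma exists_id_eq_add_of_factors {R₁ M R₂ B₁ A₁ A₂ : C}
    {f : R₁ ⟶ M} {g : M ⟶ R₂} {h : R₂ ⟶ R₁⟦(1:ℤ)⟧} (hT : Triangle.mk f g h ∈ distTriang C)
    {a : R₁ ⟶ B₁} {b : B₁ ⟶ A₁} {c : A₁ ⟶ R₁⟦(1:ℤ)⟧} (hT₁ : Triangle.mk a b c ∈ distTriang C)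
    {f' : B₁ ⟶ M} (hf : f = a ≫ f') {g' : M ⟶ A₂} {c₂ : A₂ ⟶ R₂} (hg : g = g' ≫ c₂)
    (hc : c₂ ≫ h ≫ a⟦(1:ℤ)⟧' = 0) :
    ∃ (β : A₂ ⟶ M) (γ : M ⟶ B₁), 𝟙 M = g' ≫ β + γ ≫ f' := by
  have hrot := rot_of_distTriang _ hT₁
  obtain ⟨φ, hφ, hφh⟩ : ∃ φ : A₁ ⟶ R₂, b ≫ φ = f' ≫ g ∧ c ≫ (𝟙 R₁)⟦(1:ℤ)⟧' = φ ≫ h :=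
    complete_distinguished_triangle_morphism _ _ hT₁ hT (𝟙 R₁) f' (by
      show a ≫ f' = 𝟙 R₁ ≫ f
      rw [Category.id_comp, hf])
  rw [(shiftFunctor C (1:ℤ)).map_id, Category.comp_id] at hφh
  obtain ⟨e, he⟩ : ∃ e : A₂ ⟶ A₁, c₂ ≫ h = e ≫ c :=
    Triangle.coyoneda_exact₃ _ hrot (c₂ ≫ h) (by
      show (c₂ ≫ h) ≫ (-a⟦(1:ℤ)⟧') = 0
      rw [Preadditive.comp_neg, Category.assoc, hc, neg_zero])
  obtain ⟨β, hβ⟩ : ∃ β : A₂ ⟶ M, c₂ - e ≫ φ = β ≫ g :=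
    Triangle.coyoneda_exact₃ _ hT (c₂ - e ≫ φ) (by
      show (c₂ - e ≫ φ) ≫ h = 0
      rw [Preadditive.sub_comp, he, Category.assoc, ← hφh, sub_self])
  obtain ⟨t, ht⟩ : ∃ t : M ⟶ B₁, g' ≫ e = t ≫ b :=
    Triangle.coyoneda_exact₂ _ hrot (g' ≫ e) (by
      show (g' ≫ e) ≫ c = 0
      rw [Category.assoc, ← he, ← Category.assoc, ← hg]
      exact comp_distTriang_mor_zero₂₃ _ hT)
  obtain ⟨n, hn⟩ : ∃ n : M ⟶ R₁, 𝟙 M - g' ≫ β - t ≫ f' = n ≫ f :=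
    Triangle.coyoneda_exact₂ _ hT (𝟙 M - g' ≫ β - t ≫ f') (by
      show (𝟙 M - g' ≫ β - t ≫ f') ≫ g = 0
      simp only [Preadditive.sub_comp, Category.id_comp, Category.assoc, ← hβ, ← hφ,
        Preadditive.comp_sub, ← reassoc_of% ht, ← hg]
      abel)
  refine ⟨β, t + n ≫ a, ?_⟩
  rw [Preadditive.add_comp, Category.assoc, ← hf, ← hn]
  abel

section TwoTerm

variable {R X : Set C}

lemma mem_of_relRigid_of_subset_star (haddX : AddClosed X) (hXX : RelRigid R X X)
    (hRX : R ⊆ star (shiftSet X (-1)) X) {M : C} (hM : M ∈ star R (shiftSet R 1))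
    (hMX : RelRigid R {M} X) (hXM : RelRigid R X {M}) : M ∈ X := by
  obtain ⟨R₁, hR₁, R₂, hR₂, f, g, h, hT⟩ := exists_distTriang_of_mem_star_shiftSet hM
  obtain ⟨A₁, B₁, w₁, a₁, b₁, hA₁, hB₁, hT₁⟩ := hRX hR₁
  obtain ⟨A₂, B₂, w₂, a₂, b₂, hA₂, hB₂, hT₂⟩ := hRX hR₂
  replace hA₁ : A₁⟦(1:ℤ)⟧ ∈ X := haddX.shift_mem_of_mem_shiftSet_neg hA₁
  replace hA₂ : A₂⟦(1:ℤ)⟧ ∈ X := haddX.shift_mem_of_mem_shiftSet_neg hA₂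
  obtain ⟨f', hf⟩ : ∃ f' : B₁ ⟶ M, f = a₁ ≫ f' :=
    Triangle.yoneda_exact₂ _ hT₁ f (hXM.comp_eq_zero_of_shift_mem hA₁ hR₁ rfl w₁ f)
  obtain ⟨g', hg⟩ : ∃ g' : M ⟶ A₂⟦(1:ℤ)⟧, g = g' ≫ (-w₂⟦(1:ℤ)⟧') :=
    Triangle.coyoneda_exact₁ _ (rot_of_distTriang _ hT₂) g
      (hMX.comp_eq_zero rfl hR₂ hB₂ g (a₂⟦(1:ℤ)⟧'))
  obtain ⟨β, γ, hid⟩ := exists_id_eq_add_of_factors hT (rot_of_distTriang _ hT₁) hf hg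
    (hXX.comp_eq_zero hA₂ hR₂ hB₁ _ _)
  exact haddX.mem_of_id_eq_add hA₂ hB₁ hid

lemma exists_isLeftApprox_of_subset_star (haddX : AddClosed X) (hXX : RelRigid R X X)
    (hRX : R ⊆ star (shiftSet X (-1)) X) {R₀ : C} (hR₀ : R₀ ∈ R) :
    ∃ (X₀ : C) (f : R₀ ⟶ X₀), IsLeftApprox X f := by
  obtain ⟨A, B, w, a, b, hA, hB, hT⟩ := hRX hR₀
  refine ⟨B, a, hB, fun X' hX' g => ?_⟩
  obtain ⟨g', hg'⟩ : ∃ g' : B ⟶ X', g = a ≫ g' := Triangle.yoneda_exact₂ _ hT g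
    (hXX.comp_eq_zero_of_shift_mem (haddX.shift_mem_of_mem_shiftSet_neg hA) hR₀ hX' w g)
  exact ⟨g', hg'.symm⟩

lemma relRigid_cone_of_isLeftApprox (hXX : RelRigid R X X) {R₀ X₀ V : C} {f : R₀ ⟶ X₀}
    {g : X₀ ⟶ V} {d : V ⟶ R₀⟦(1:ℤ)⟧} (hT : Triangle.mk f g d ∈ distTriang C)
    (hf : IsLeftApprox X f) : RelRigid R {V} X := by
  rintro _ X' rfl hX' φ hφ
  obtain ⟨ξ, rfl⟩ : ∃ ξ : R₀⟦(1:ℤ)⟧ ⟶ X'⟦(1:ℤ)⟧, φ = d ≫ ξ :=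
    Triangle.yoneda_exact₃ _ hT φ (hXX hf.1 hX' _ (hφ.precomp g))
  obtain ⟨η, hη⟩ := hf.2 hX' ((shiftFunctor C (1:ℤ)).preimage ξ)
  have hd : d ≫ f⟦(1:ℤ)⟧' = 0 := by
    rw [← neg_eq_zero, ← Preadditive.comp_neg]
    exact comp_distTriang_mor_zero₂₃ _ (rot_of_distTriang _ hT)
  rw [← (shiftFunctor C (1:ℤ)).map_preimage ξ, ← hη, Functor.map_comp, reassoc_of% hd,
    zero_comp]

lemma cone_mem_star_of_distTriang (hrig : Rigid R) (haddR : AddClosed R) {R₀ X₀ V : C}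
    {f : R₀ ⟶ X₀} {g : X₀ ⟶ V} {d : V ⟶ R₀⟦(1:ℤ)⟧} (hT : Triangle.mk f g d ∈ distTriang C)
    (hR₀ : R₀ ∈ R) (hX₀ : X₀ ∈ star R (shiftSet R 1)) : V ∈ star R (shiftSet R 1) := by
  obtain ⟨R₁, hR₁, R₂, hR₂, u, v, w, hS⟩ := exists_distTriang_of_mem_star_shiftSet hX₀
  obtain ⟨Q, c, e, hQ⟩ := distinguished_cocone_triangle (u ≫ g)
  obtain ⟨φ₁, χ, φ₂, ψ, ε, hid⟩ := exists_id_eq_add_of_cone_comp hT hS hQ (hrig hR₀ hR₂ _)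
  have hR1 : AddClosed (shiftSet R 1) := haddR.shiftSet 1
  have hQR : Q ∈ shiftSet R 1 :=
    hR1.mem_of_id_eq_add (p₁ := biprod.lift φ₁ φ₂) (q₁ := biprod.desc χ ψ)
      (hR1.biprod_mem (shift_mem_shiftSet hR₂ 1) (shift_mem_shiftSet hR₀ 1))
      (shift_mem_shiftSet hR₁ 1) (by rw [biprod.lift_desc, hid])
  exact ⟨R₁, Q, u ≫ g, c, e, hR₁, hQR, hQ⟩

lemma subset_star_of_twoTermMaximal (hrig : Rigid R) (haddR : AddClosed R)
    (hmax : TwoTermMaximal R X) (happ : ∀ R₀ ∈ R, ∃ (X₀ : C) (f : R₀ ⟶ X₀), IsLeftApprox X f) :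
    R ⊆ star (shiftSet X (-1)) X := by
  intro R₀ hR₀
  have hXX : RelRigid R X X := hmax.1.1
  obtain ⟨X₀, f, hf⟩ := happ R₀ hR₀
  obtain ⟨V, g, d, hT⟩ := distinguished_cocone_triangle f
  have hX₀ : {X₀} ⊆ X := Set.singleton_subset_iff.mpr hf.1
  have hg : ∀ R' ∈ R, ∀ γ : R' ⟶ V, ∃ δ : R' ⟶ X₀, γ = δ ≫ g :=
    fun R' hR' γ => Triangle.coyoneda_exact₃ _ hT γ (hrig hR' hR₀ _)
  have hVX : RelRigid R {V} X := relRigid_cone_of_isLeftApprox hXX hT hf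
  have hXV : RelRigid R X {V} := (hXX.mono subset_rfl hX₀).of_factors_right g hg
  have hVV : RelRigid R {V} {V} := (hVX.mono subset_rfl hX₀).of_factors_right g hg
  have hV : V ∈ X := hmax.2 V (cone_mem_star_of_distTriang hrig haddR hT hR₀ (hmax.1.2 hf.1))
    (hXX.insert hVX hXV hVV).addClosure
  exact ⟨V⟦(-1:ℤ)⟧, X₀, _, _, _, ⟨V, hV, ⟨Iso.refl _⟩⟩, hf.1, inv_rot_of_distTriang _ hT⟩

lemma twoTermMaximal_of_subset_star (haddX : AddClosed X) (hX : TwoTermRigid R X)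
    (hRX : R ⊆ star (shiftSet X (-1)) X) : TwoTermMaximal R X := by
  refine ⟨hX, fun M hM hrel => ?_⟩
  have hMM : {M} ⊆ {Z | addClosure (insert M X) Z} :=
    Set.singleton_subset_iff.mpr (.of (Set.mem_insert M X))
  have hXM : X ⊆ {Z | addClosure (insert M X) Z} := fun _ hZ => .of (Set.mem_insert_of_mem M hZ)
  exact mem_of_relRigid_of_subset_star haddX hX.1 hRX hM (hrel.mono hMM hXM) (hrel.mono hXM hMM)

lemma twoTermWCT_of_subset_star (haddX : AddClosed X) (hX : TwoTermRigid R X)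
    (hRX : R ⊆ star (shiftSet X (-1)) X) : TwoTermWCT R X := by
  refine ⟨hX.2, hRX, fun M => ⟨fun hM => ?_, fun ⟨hM, hMX, hXM⟩ =>
    mem_of_relRigid_of_subset_star haddX hX.1 hRX hM hMX hXM⟩⟩
  have hMX : {M} ⊆ X := Set.singleton_subset_iff.mpr hM
  exact ⟨hX.2 hM, hX.1.mono hMX subset_rfl, hX.1.mono subset_rfl hMX⟩

end TwoTerm

theorem statement_8_general (R X : Set C)
    (hrig : Rigid R) (haddR : AddClosed R) (haddX : AddClosed X)
    (hX : TwoTermRigid R X) :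
    ((TwoTermMaximal R X ∧ ∀ R₀ ∈ R, ∃ (X₀ : C) (f : R₀ ⟶ X₀), IsLeftApprox X f) ↔
        R ⊆ star (shiftSet X (-1)) X) ∧
      (R ⊆ star (shiftSet X (-1)) X ↔ TwoTermWCT R X) :=
  ⟨⟨fun ⟨hmax, happ⟩ => subset_star_of_twoTermMaximal hrig haddR hmax happ,
      fun hRX => ⟨twoTermMaximal_of_subset_star haddX hX hRX,
        fun _ hR₀ => exists_isLeftApprox_of_subset_star haddX hX.1 hRX hR₀⟩⟩,
    ⟨twoTermWCT_of_subset_star haddX hX, fun hWCT => hWCT.2.1⟩⟩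

theorem statement_8 (hKS : KrullSchmidtCat C) (R X : Set C)
    (hrig : Rigid R) (haddR : AddClosed R) (haddX : AddClosed X)
    (hX : TwoTermRigid R X) :
    ((TwoTermMaximal R X ∧ ∀ R₀ ∈ R, ∃ (X₀ : C) (f : R₀ ⟶ X₀), IsLeftApprox X f) ↔
        R ⊆ star (shiftSet X (-1)) X) ∧
      (R ⊆ star (shiftSet X (-1)) X ↔ TwoTermWCT R X) :=
  statement_8_general R X hrig haddR haddX hX

end RelCT
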